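/- Let V be a set of interpretations over A. There exists an ADF D over A with prf(D) = V if and only if there exists a set V' of interpretations over A such that V ⊆ V', the ≤_i-maximal elements of V' are exactly V, and there is an adm-characterization of V'. -/
import Mathlib


open Classical

/-- Three-valued interpretations over `A`:
`none` is **u**, `some true` is **t**, `some false` is **f**. -/
abbrev Interp (A : Type*) := A → Option Bool

/-- Two-valued interpretations over `A`. -/
abbrev Interp2 (A : Type*) := A → Bool

variable {A : Type*}

/-- The information order `≤ᵢ`, lifted pointwise to interpretations. -/
def leI (v w : Interp A) : Prop := ∀ a, v a = none ∨ v a = w a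

/-- The strict information order `<ᵢ`. -/
def ltI (v w : Interp A) : Prop := leI v w ∧ v ≠ w

/-- `w ∈ [v]₂`: the two-valued interpretation `w` extends `v`. -/
def ext2 (v : Interp A) (w : Interp2 A) : Prop := ∀ a, v a = none ∨ v a = some (w a)

/-- View a two-valued interpretation as a three-valued one. -/
def toI (w : Interp2 A) : Interp A := fun a => some (w a)

/-- `v` is two-valued. -/
def twoValued (v : Interp A) : Prop := ∀ a, v a ≠ none

/-- The operator `Γ_D` of the ADF with acceptance conditions `C`:
it maps `a` to the consensus `⊓ᵢ { C_a(w) | w ∈ [v]₂ }`. -/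
noncomputable def Gamma (C : A → Interp2 A → Bool) (v : Interp A) : Interp A :=
  fun a =>
    if ∀ w, ext2 v w → C a w = true then some true
    else if ∀ w, ext2 v w → C a w = false then some false
    else none

/-- `v` is admissible for the ADF `C`: `v ≤ᵢ Γ(v)`. -/
def admissible (C : A → Interp2 A → Bool) (v : Interp A) : Prop := leI v (Gamma C v)

/-- `v` is complete for the ADF `C`: `Γ(v) = v`. -/
def complete (C : A → Interp2 A → Bool) (v : Interp A) : Prop := Gamma C v = v

/-- `v` is preferred for the ADF `C`: `≤ᵢ`-maximal admissible. -/
def preferred (C : A → Interp2 A → Bool) (v : Interp A) : Prop :=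
  admissible C v ∧ ¬ ∃ w, admissible C w ∧ ltI v w

/-- `v` is a two-valued model of the ADF `C`. -/
def isModel (C : A → Interp2 A → Bool) (v : Interp A) : Prop :=
  twoValued v ∧ Gamma C v = v

/-- The `≤ᵢ`-maximal elements of a set of interpretations. -/
def maximals (W : Set (Interp A)) : Set (Interp A) :=
  {v ∈ W | ¬ ∃ w ∈ W, ltI v w}

/- SETAFs. A SETAF over `A` is a set `X` of pairs `(B, a)` of a (nonempty) set of
attackers `B ⊆ A` and an attacked statement `a ∈ A`. -/

/-- `a` is acceptable wrt `v` in the SETAF `X`. -/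
def acceptable (X : Set (Set A × A)) (v : Interp A) (a : A) : Prop :=
  ∀ B, (B, a) ∈ X → ∃ b ∈ B, v b = some false

/-- `a` is unacceptable wrt `v` in the SETAF `X`. -/
def unacceptable (X : Set (Set A × A)) (v : Interp A) (a : A) : Prop :=
  ∃ B, (B, a) ∈ X ∧ ∀ b ∈ B, v b = some true

/-- `v` is admissible for the SETAF `X`. -/
def admS (X : Set (Set A × A)) (v : Interp A) : Prop :=
  ∀ a, (v a = some true → acceptable X v a) ∧ (v a = some false → unacceptable X v a)

/-- `v` is complete for the SETAF `X`. -/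
def comS (X : Set (Set A × A)) (v : Interp A) : Prop :=
  ∀ a, (v a = some true ↔ acceptable X v a) ∧ (v a = some false ↔ unacceptable X v a)

/-- `v` is preferred for the SETAF `X`: `≤ᵢ`-maximal admissible. -/
def prfS (X : Set (Set A × A)) (v : Interp A) : Prop :=
  admS X v ∧ ¬ ∃ w, admS X w ∧ ltI v w

/-- `v` is a two-valued model of the SETAF `X`. -/
def modS (X : Set (Set A × A)) (v : Interp A) : Prop :=
  admS X v ∧ twoValued v

/-- The ADF `D_S` corresponding to the SETAF `X`:
`C_a(w) = t` iff every attack `(B, a) ∈ X` has some `b ∈ B` with `w(b) = f`. -/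
noncomputable def setafADF (X : Set (Set A × A)) : A → Interp2 A → Bool :=
  fun a w => if ∀ B, (B, a) ∈ X → ∃ b ∈ B, w b = false then true else false

/-- The ADF `D_(A,R)` associated to the AF with attack relation `R`. -/
noncomputable def afADF (R : Set (A × A)) : A → Interp2 A → Bool :=
  fun a w => if ∀ b, (b, a) ∈ R → w b = false then true else false

/-- `f` is an adm-characterization of `V`. -/
def admChar (f : Interp2 A → Interp2 A) (V : Set (Interp A)) : Prop :=
  ∀ v : Interp A, v ∈ V ↔ ∀ a, v a ≠ none → ∀ w, ext2 v w → some (f w a) = v a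

/-- `f` is a com-characterization of `V`. -/
def comChar (f : Interp2 A → Interp2 A) (V : Set (Interp A)) : Prop :=
  ∀ v : Interp A, v ∈ V ↔
    ((∀ a, v a ≠ none → ∀ w, ext2 v w → some (f w a) = v a) ∧
     (∀ a, v a = none →
        (∃ w, ext2 v w ∧ f w a = true) ∧ (∃ w, ext2 v w ∧ f w a = false)))

/-- `f` is a mod-characterization of `V`. -/
def modChar (f : Interp2 A → Interp2 A) (V : Set (Interp A)) : Prop :=
  (∀ v ∈ V, twoValued v) ∧ ∀ w : Interp2 A, (toI w ∈ V ↔ f w = w)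

/-- The function `f_D` of the ADF `D` with acceptance conditions `C`. -/
def charOf (C : A → Interp2 A → Bool) : Interp2 A → Interp2 A := fun w a => C a w

/-- The ADF `D_f` built from `f : V₂ → V₂`: `C_a(w) = t` iff `f(w)(a) = t`. -/
def adfOf (f : Interp2 A → Interp2 A) : A → Interp2 A → Bool := fun a w => f w a

/-- `b` is supporting for `a` in the ADF `C`. -/
def supporting [DecidableEq A] (C : A → Interp2 A → Bool) (b a : A) : Prop :=
  ∀ w : Interp2 A, w b = false → C a w = true → C a (Function.update w b true) = true

/-- `b` is attacking for `a` in the ADF `C`. -/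
def attacking [DecidableEq A] (C : A → Interp2 A → Bool) (b a : A) : Prop :=
  ∀ w : Interp2 A, w b = false → C a (Function.update w b true) = true → C a w = true

/-- The ADF `C` is bipolar. -/
def bipolar [DecidableEq A] (C : A → Interp2 A → Bool) : Prop :=
  ∀ a b, supporting C b a ∨ attacking C b a

lemma ext2_exists (v : Interp A) : ∃ w, ext2 v w := by
  refine ⟨fun a => (v a).getD true, fun a => ?_⟩
  cases h : v a with
  | none => exact Or.inl rfl
  | some b => right; simp [h]

lemma adm_iff (C : A → Interp2 A → Bool) (v : Interp A) :
    admissible C v ↔ ∀ a, v a ≠ none → ∀ w, ext2 v w → some (C a w) = v a := by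
  constructor
  · intro h a ha w hw
    rcases h a with h' | h'
    · exact absurd h' ha
    · unfold Gamma at h'
      split_ifs at h' with h1 h2
      · rw [h', h1 w hw]
      · rw [h', h2 w hw]
      · exact absurd h' ha
  · intro h a
    cases hv : v a with
    | none => exact Or.inl rfl
    | some b =>
      right
      have h' := fun w hw => h a (by simp [hv]) w hw
      unfold Gamma
      cases b with
      | true =>
        rw [if_pos]
        intro w hw
        have := h' w hw
        rw [hv] at this
        exact Option.some.inj this
      | false =>
        obtain ⟨w0, hw0⟩ := ext2_exists v
        have hf0 : C a w0 = false := by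
          have := h' w0 hw0; rw [hv] at this; exact Option.some.inj this
        rw [if_neg, if_pos]
        · intro w hw
          have := h' w hw; rw [hv] at this; exact Option.some.inj this
        · intro hall
          have := hall w0 hw0
          rw [hf0] at this; exact Bool.false_ne_true this

lemma adm_char_of (C : A → Interp2 A → Bool) :
    admChar (charOf C) {v | admissible C v} := by
  intro v
  exact adm_iff C v

lemma prf_eq_max (C : A → Interp2 A → Bool) :
    {v : Interp A | preferred C v} = maximals {v | admissible C v} := by
  ext v
  unfold preferred maximals
  simp only [Set.mem_setOf_eq, Set.mem_sep_iff]

/-- `V` is realizable under preferred semantics by some ADF over `A`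
iff there is a set `V'` of interpretations with `V ⊆ V'`, whose `≤ᵢ`-maximal
elements are exactly `V`, that has an adm-characterization. -/
theorem prf_realizable_iff (A : Type*) [Fintype A] (V : Set (Interp A)) :
    (∃ C : A → Interp2 A → Bool, {v : Interp A | preferred C v} = V) ↔
      (∃ V' : Set (Interp A), V ⊆ V' ∧ maximals V' = V ∧
        ∃ f : Interp2 A → Interp2 A, admChar f V') := by
  constructor
  · rintro ⟨C, hC⟩
    refine ⟨{v | admissible C v}, ?_, ?_, charOf C, adm_char_of C⟩
    · intro v hv
      rw [← hC] at hv
      exact hv.1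
    · rw [← prf_eq_max C, hC]
  · rintro ⟨V', _, hmax, f, hf⟩
    refine ⟨adfOf f, ?_⟩
    have hadm : {v : Interp A | admissible (adfOf f) v} = V' := by
      ext v
      rw [Set.mem_setOf_eq, adm_iff]
      exact (hf v).symm
    rw [prf_eq_max, hadm, hmax]
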